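/- arXiv:1809.00508 — 3 statements merged into one kernel-verified Lean document; each statement's English description precedes it below -/
import Mathlib

section
/- Let δ: Form(L)×Form(L) → Form(L∖{p}) be sound, meaning {F,G} ⊨ δ(F,G) for all F,G. Then δ is a forgetting operator for p if and only if for all formulas F,G and every valuation v on L∖{p} with v ⊨ δ(F,G), there exists an extension of v to L that is a model of both F and G. -/
inductive Fm (V : Type) : Type
  | bot : Fm V
  | var : V → Fm V
  | not : Fm V → Fm V
  | and : Fm V → Fm V → Fm V
  | or  : Fm V → Fm V → Fm V
  | imp : Fm V → Fm V → Fm V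
  | iff : Fm V → Fm V → Fm V

def Fm.eval {V : Type} (v : V → Bool) : Fm V → Bool
  | .bot => false
  | .var p => v p
  | .not F => !(F.eval v)
  | .and F G => F.eval v && G.eval v
  | .or F G => F.eval v || G.eval v
  | .imp F G => !(F.eval v) || G.eval v
  | .iff F G => F.eval v == G.eval v

/-- The set of propositional variables occurring in a formula. -/
def Fm.vars {V : Type} : Fm V → Set V
  | .bot => ∅
  | .var q => {q}
  | .not F => F.vars
  | .and F G => F.vars ∪ G.vars
  | .or F G => F.vars ∪ G.vars
  | .imp F G => F.vars ∪ G.vars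
  | .iff F G => F.vars ∪ G.vars

/-- Logical entailment `K ⊨ F`. -/
def Entails {V : Type} (K : Set (Fm V)) (F : Fm V) : Prop :=
  ∀ v : V → Bool, (∀ G ∈ K, G.eval v = true) → F.eval v = true

/-- The canonical conservative retraction `[K, L∖{p}]`:
all formulas not containing `p` entailed by `K`. -/
def Retract {V : Type} (K : Set (Fm V)) (p : V) : Set (Fm V) :=
  {H | p ∉ H.vars ∧ Entails K H}

/-- `δ` is a forgetting operator for the variable `p`: its outputs avoid `p`, and
`δ F G` is logically equivalent to the canonical conservative retraction `[{F,G}, L∖{p}]`. -/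
structure IsForgetting {V : Type} (p : V) (δ : Fm V → Fm V → Fm V) : Prop where
  avoid : ∀ F G, p ∉ (δ F G).vars
  equiv : ∀ F G (v : V → Bool),
    (δ F G).eval v = true ↔ ∀ H ∈ Retract ({F, G} : Set (Fm V)) p, H.eval v = true

def Fm.varList {V : Type} : Fm V → List V
  | .bot => []
  | .var q => [q]
  | .not F => F.varList
  | .and F G => F.varList ++ G.varList
  | .or F G => F.varList ++ G.varList
  | .imp F G => F.varList ++ G.varList
  | .iff F G => F.varList ++ G.varList

theorem Fm.mem_varList {V : Type} (F : Fm V) (q : V) :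
    q ∈ F.varList ↔ q ∈ F.vars := by
  induction F <;> simp [Fm.varList, Fm.vars, *]

theorem Fm.eval_congr {V : Type} (F : Fm V) (v w : V → Bool)
    (h : ∀ q ∈ F.vars, v q = w q) : F.eval v = F.eval w := by
  induction F with
  | bot => rfl
  | var q => exact h q (by simp [Fm.vars])
  | not F ih => simp [Fm.eval, ih h]
  | and F G ihF ihG =>
      simp [Fm.eval, ihF fun q hq => h q (Or.inl hq), ihG fun q hq => h q (Or.inr hq)]
  | or F G ihF ihG =>
      simp [Fm.eval, ihF fun q hq => h q (Or.inl hq), ihG fun q hq => h q (Or.inr hq)]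
  | imp F G ihF ihG =>
      simp [Fm.eval, ihF fun q hq => h q (Or.inl hq), ihG fun q hq => h q (Or.inr hq)]
  | iff F G ihF ihG =>
      simp [Fm.eval, ihF fun q hq => h q (Or.inl hq), ihG fun q hq => h q (Or.inr hq)]

def chi {V : Type} (v : V → Bool) : List V → Fm V
  | [] => .not .bot
  | q :: L => .and (if v q then .var q else .not (.var q)) (chi v L)

theorem chi_vars {V : Type} (v : V → Bool) (L : List V) (q : V) :
    q ∈ (chi v L).vars → q ∈ L := by
  induction L with
  | nil => simp [chi, Fm.vars]
  | cons a L ih =>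
      intro h
      rcases h with h | h
      · have : q = a := by by_cases ha : v a <;> simp [ha, Fm.vars] at h <;> exact h
        simp [this]
      · exact List.mem_cons_of_mem _ (ih h)

theorem chi_eval {V : Type} (v w : V → Bool) (L : List V) :
    (chi v L).eval w = true ↔ ∀ q ∈ L, w q = v q := by
  induction L with
  | nil => simp [chi, Fm.eval]
  | cons a L ih =>
      simp only [chi, Fm.eval, Bool.and_eq_true, ih, List.mem_cons]
      constructor
      · rintro ⟨h1, h2⟩ q (rfl | hq)
        · by_cases ha : v q <;> simp [ha, Fm.eval] at h1 ⊢ <;> simp [h1]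
        · exact h2 q hq
      · intro h
        refine ⟨?_, fun q hq => h q (Or.inr hq)⟩
        have := h a (Or.inl rfl)
        by_cases ha : v a <;> simp [ha, Fm.eval, this]

/-- Characterization of forgetting operators among sound `p`-avoiding operators. -/
theorem stmt6 {V : Type} (p : V) (δ : Fm V → Fm V → Fm V)
    (havoid : ∀ F G, p ∉ (δ F G).vars)
    (hsound : ∀ F G, Entails ({F, G} : Set (Fm V)) (δ F G)) :
    IsForgetting p δ ↔
      ∀ (F G : Fm V) (v : V → Bool), (δ F G).eval v = true →
        ∃ vh : V → Bool, (∀ q, q ≠ p → vh q = v q) ∧ F.eval vh = true ∧ G.eval vh = true := by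
  classical
  constructor
  · intro h F G v hδ
    by_contra hneg
    push_neg at hneg
    set L : List V := (F.varList ++ G.varList).filter (fun q => q ≠ p) with hL
    have hpL : p ∉ L := by simp [hL]
    have hmem : ∀ q, q ∈ F.vars ∪ G.vars → q ≠ p → q ∈ L := by
      intro q hq hqp
      simp [hL, List.mem_filter, hqp]
      rcases hq with hq | hq
      · exact Or.inl ((F.mem_varList q).2 hq)
      · exact Or.inr ((G.mem_varList q).2 hq)
    have hret : (Fm.not (chi v L)) ∈ Retract ({F, G} : Set (Fm V)) p := by
      constructor
      · intro hp
        exact hpL (chi_vars v L p hp)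
      · intro w hw
        have hF : F.eval w = true := hw F (Or.inl rfl)
        have hG : G.eval w = true := hw G (Or.inr rfl)
        simp only [Fm.eval, Bool.not_eq_true']
        by_contra hchi
        rw [Bool.not_eq_false, chi_eval] at hchi
        set vh : V → Bool := fun q => if q = p then w p else v q with hvh
        have hag : ∀ q ≠ p, vh q = v q := by
          intro q hq; simp [hvh, hq]
        have hagw : ∀ q ∈ F.vars ∪ G.vars, vh q = w q := by
          intro q hq
          by_cases hqp : q = p
          · subst hqp; simp [hvh]
          · have hqL := hmem q hq hqp
            simp [hvh, hqp, hchi q hqL]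
        have hFvh : F.eval vh = true := by
          rw [F.eval_congr vh w (fun q hq => hagw q (Or.inl hq))]; exact hF
        have hGvh : G.eval vh = true := by
          rw [G.eval_congr vh w (fun q hq => hagw q (Or.inr hq))]; exact hG
        exact hneg vh hag hFvh hGvh
    have := (h.equiv F G v).1 hδ _ hret
    have hT : (chi v L).eval v = true := (chi_eval v v L).2 fun q _ => rfl
    simp [Fm.eval, hT] at this
  · intro h
    refine ⟨havoid, fun F G v => ⟨?_, ?_⟩⟩
    · intro hδ H hH
      obtain ⟨vh, hag, hF, hG⟩ := h F G v hδ
      have hH' : H.eval vh = true := hH.2 vh (by rintro K (rfl | rfl) <;> assumption)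
      rw [← H.eval_congr vh v (fun q hq => hag q (fun hqp => hH.1 (hqp ▸ hq)))]
      exact hH'
    · intro hall
      exact hall (δ F G) ⟨havoid F G, hsound F G⟩
end

section
/- Location property: for a knowledge base K and formula F, K ⊨ F if and only if δ_{L∖var(F)}[K] ⊨ F, where δ_{L∖var(F)} denotes the composition of forgetting operators for all variables not occurring in F. -/
/-- Successive application of the forgetting operators of a list of variables. -/
def forgetList {V : Type} (δ : V → Fm V → Fm V → Fm V) : List V → Set (Fm V) → Set (Fm V)
  | [], K => K
  | p :: ps, K => forgetList δ ps (Set.image2 (δ p) K K)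

def Models {V : Type} (v : V → Bool) (K : Set (Fm V)) : Prop :=
  ∀ G ∈ K, G.eval v = true

namespace Fm

variable {V : Type}

theorem eval_congr_s11 {F : Fm V} {v w : V → Bool} (h : ∀ q ∈ F.vars, v q = w q) :
    F.eval v = F.eval w := by
  induction F with
  | bot => rfl
  | var q => exact h q rfl
  | not F ih => simp only [eval, ih h]
  | and F G ihF ihG | or F G ihF ihG | imp F G ihF ihG | iff F G ihF ihG =>
    simp only [eval, ihF fun q hq => h q (Or.inl hq), ihG fun q hq => h q (Or.inr hq)]

theorem eval_update_of_notMem [DecidableEq V] {F : Fm V} {p : V} (hp : p ∉ F.vars)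
    (v : V → Bool) (b : Bool) : F.eval (Function.update v p b) = F.eval v :=
  eval_congr_s11 fun _ hq => Function.update_of_ne (ne_of_mem_of_not_mem hq hp) b v

def litConj (v : V → Bool) : List V → Fm V
  | [] => .not .bot
  | q :: l => .and (if v q then .var q else .not (.var q)) (litConj v l)

theorem vars_litConj (v : V → Bool) (l : List V) : (litConj v l).vars ⊆ {q | q ∈ l} := by
  induction l with
  | nil => simp [litConj, vars]
  | cons a l ih =>
    rintro q (hq | hq)
    · by_cases hv : v a <;> simp_all [vars]
    · exact List.mem_cons_of_mem a (ih hq)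

theorem eval_litConj (v w : V → Bool) (l : List V) :
    (litConj v l).eval w = true ↔ ∀ q ∈ l, w q = v q := by
  induction l with
  | nil => simp [litConj, eval]
  | cons a l ih =>
    cases hv : v a <;> simp [litConj, eval, ih, hv]

end Fm

open Fm

section

variable {V : Type}

theorem models_retract_iff [Fintype V] [DecidableEq V] {K : Set (Fm V)} {p : V} {v : V → Bool} :
    Models v (Retract K p) ↔ ∃ b, Models (Function.update v p b) K := by
  constructor
  · intro hv
    by_contra! hK
    simp only [Models, not_forall, exists_prop] at hK
    -- `χ` pins down `v` off `p`; since no value of `p` extends it to a model of `K`, `K ⊨ ¬χ`.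
    set χ : Fm V := litConj v (Finset.univ.erase p).toList
    have hχv : χ.eval v = true := (eval_litConj v v _).2 fun _ _ => rfl
    have hχp : p ∉ χ.vars := fun hp => by simpa using vars_litConj v _ hp
    have hKχ : Entails K χ.not := by
      intro w hw
      by_contra hχw
      have hw_eq : w = Function.update v p (w p) := by
        funext q
        rcases eq_or_ne q p with rfl | hq
        · simp
        · rw [Function.update_of_ne hq]
          exact (eval_litConj v w _).1 (by simpa [eval] using hχw) q (by simp [hq])
      obtain ⟨G, hG, hGw⟩ := hK (w p)
      exact hGw (hw_eq ▸ hw G hG)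
    simpa [eval, hχv] using hv χ.not ⟨hχp, hKχ⟩
  · rintro ⟨b, hb⟩ H ⟨hHp, hKH⟩
    rw [← eval_update_of_notMem hHp v b]
    exact hKH _ hb

theorem models_image2_iff [Fintype V] [DecidableEq V] {p : V} {δp : Fm V → Fm V → Fm V}
    (hδ : IsForgetting p δp) {K : Set (Fm V)} {v : V → Bool} :
    Models v (Set.image2 δp K K) ↔ ∃ b, Models (Function.update v p b) K := by
  have hδ_eval : ∀ G₁ G₂, (δp G₁ G₂).eval v = true ↔
      ∃ b, Models (Function.update v p b) {G₁, G₂} := fun G₁ G₂ =>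
    (hδ.equiv G₁ G₂ v).trans models_retract_iff
  constructor
  · intro hv
    by_contra! hK
    simp only [Models, not_forall, exists_prop] at hK
    -- A formula of `K` failing for `p = true` and one failing for `p = false` form a pair
    -- whose forgetting is already false at `v`.
    obtain ⟨G₁, hG₁, hG₁f⟩ := hK true
    obtain ⟨G₂, hG₂, hG₂f⟩ := hK false
    obtain ⟨b, hb⟩ := (hδ_eval G₁ G₂).1 (hv _ (Set.mem_image2_of_mem hG₁ hG₂))
    cases b
    · exact hG₂f (hb G₂ (by simp))
    · exact hG₁f (hb G₁ (by simp))
  · rintro ⟨b, hb⟩ _ ⟨G₁, hG₁, G₂, hG₂, rfl⟩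
    exact (hδ_eval G₁ G₂).2 ⟨b, by rintro G (rfl | rfl) <;> apply hb <;> assumption⟩

theorem entails_image2_iff [Fintype V] {p : V} {δp : Fm V → Fm V → Fm V}
    (hδ : IsForgetting p δp) {K : Set (Fm V)} {F : Fm V} (hp : p ∉ F.vars) :
    Entails (Set.image2 δp K K) F ↔ Entails K F := by
  classical
  constructor
  · intro h v hv
    exact h v (models_image2_iff hδ |>.2 ⟨v p, by rwa [Function.update_eq_self]⟩)
  · intro h v hv
    obtain ⟨b, hb⟩ := (models_image2_iff hδ).1 hv
    rw [← eval_update_of_notMem hp v b]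
    exact h _ hb

theorem entails_forgetList_iff [Fintype V] {δ : V → Fm V → Fm V → Fm V}
    (hδ : ∀ p : V, IsForgetting p (δ p)) {F : Fm V} {l : List V} (hl : ∀ q ∈ l, q ∉ F.vars)
    (K : Set (Fm V)) : Entails (forgetList δ l K) F ↔ Entails K F := by
  induction l generalizing K with
  | nil => rfl
  | cons p ps ih =>
    rw [forgetList, ih (fun q hq => hl q (List.mem_cons_of_mem p hq)),
      entails_image2_iff (hδ p) (hl p List.mem_cons_self)]

end

theorem stmt11_general {V : Type} [Fintype V] (δ : V → Fm V → Fm V → Fm V)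
    (hδ : ∀ p : V, IsForgetting p (δ p)) (K : Set (Fm V)) (F : Fm V)
    (l : List V) (hvars : ∀ q : V, q ∈ l ↔ q ∉ F.vars) :
    Entails K F ↔ Entails (forgetList δ l K) F :=
  (entails_forgetList_iff hδ (fun q => (hvars q).1) K).symm

/-- Location property: `K ⊨ F` iff `δ_{L∖var(F)}[K] ⊨ F`. -/
theorem stmt11 {V : Type} [Fintype V] (δ : V → Fm V → Fm V → Fm V)
    (hδ : ∀ p : V, IsForgetting p (δ p)) (K : Set (Fm V)) (hK : K.Finite) (F : Fm V)
    (l : List V) (hl : l.Nodup) (hvars : ∀ q : V, q ∈ l ↔ q ∉ F.vars) :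
    Entails K F ↔ Entails (forgetList δ l K) F :=
  stmt11_general δ hδ K F l hvars
end

section
/- Soundness of the independence rule: for any formulas F_1, F_2 and variable p, {F_1, F_2} ⊨ ∂_p(F_1,F_2), where ∂_p(F_1,F_2) = Θ(∂_{x_p}(π(F_1), π(F_2))) and, writing π(F_i) = b_i + x_p·c_i with b_i, c_i free of x_p, ∂_{x_p}(a_1,a_2) = Φ(1 + (1+b_1·b_2)·(1+(b_1+c_1)(b_2+c_2))). -/
noncomputable def Fm.poly {n : ℕ} : Fm (Fin n) → MvPolynomial (Fin n) (ZMod 2)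
  | .bot => 0
  | .var i => MvPolynomial.X i
  | .not F => 1 + F.poly
  | .and F G => F.poly * G.poly
  | .or F G => F.poly + G.poly + F.poly * G.poly
  | .imp F G => 1 + F.poly + F.poly * G.poly
  | .iff F G => 1 + F.poly + G.poly

def bval (b : Bool) : ZMod 2 := if b then 1 else 0

/-- The map `Φ` reducing every exponent of a polynomial to at most 1
(the multilinear representative modulo `I_2`). -/
noncomputable def squash {n : ℕ} (a : MvPolynomial (Fin n) (ZMod 2)) :
    MvPolynomial (Fin n) (ZMod 2) :=
  a.support.sum fun m =>
    MvPolynomial.monomial (Finsupp.mapRange (fun e => min e 1) (by simp) m) (a.coeff m)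

/-- The polynomial projection `π = Φ ∘ P`. -/
noncomputable def Fm.proj {n : ℕ} (F : Fm (Fin n)) : MvPolynomial (Fin n) (ZMod 2) :=
  squash F.poly

/-- The substitution `F{p/¬p}`. -/
def substNeg {n : ℕ} (p : Fin n) : Fm (Fin n) → Fm (Fin n)
  | .bot => .bot
  | .var q => if q = p then .not (.var p) else .var q
  | .not F => .not (substNeg p F)
  | .and F G => .and (substNeg p F) (substNeg p G)
  | .or F G => .or (substNeg p F) (substNeg p G)
  | .imp F G => .imp (substNeg p F) (substNeg p G)
  | .iff F G => .iff (substNeg p F) (substNeg p G)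

/-- The Boolean derivative `∂F/∂p`, in its semantic form `¬(F{p/¬p} ↔ F)`. -/
def derivFm {n : ℕ} (p : Fin n) (F : Fm (Fin n)) : Fm (Fin n) :=
  Fm.not (Fm.iff (substNeg p F) F)

/-- The part `b` of the decomposition `a = b + x_p·c` (free of `x_p`): `a` with `x_p := 0`. -/
noncomputable def bPart {n : ℕ} (p : Fin n) (a : MvPolynomial (Fin n) (ZMod 2)) :
    MvPolynomial (Fin n) (ZMod 2) :=
  MvPolynomial.aeval (fun j : Fin n => if j = p then 0 else MvPolynomial.X j) a

/-- The part `c` of the decomposition `a = b + x_p·c` of a multilinear polynomial: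
the formal partial derivative of `a` with respect to `x_p`. -/
noncomputable def cPart {n : ℕ} (p : Fin n) (a : MvPolynomial (Fin n) (ZMod 2)) :
    MvPolynomial (Fin n) (ZMod 2) :=
  MvPolynomial.pderiv p a

/-- The independence rule on polynomials:
`∂_{x_p}(a₁,a₂) = Φ(1 + (1 + b₁b₂)·(1 + (b₁+c₁)(b₂+c₂)))`. -/
noncomputable def indRule {n : ℕ} (p : Fin n) (a₁ a₂ : MvPolynomial (Fin n) (ZMod 2)) :
    MvPolynomial (Fin n) (ZMod 2) :=
  squash (1 + (1 + bPart p a₁ * bPart p a₂) *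
    (1 + (bPart p a₁ + cPart p a₁) * (bPart p a₂ + cPart p a₂)))

/-!
Evaluating at Boolean points does not see `Φ`, since `x ^ e = x ^ min e 1` on `ZMod 2`. For a
multilinear `a`, the parts `b` and `b + c` evaluate as the restrictions of `a` to `x_p = 0` and
`x_p = 1` (the partial derivative of a polynomial affine in `x_p` is its finite difference). So
`∂_{x_p}(π F₁, π F₂)` evaluates to `(F₁ ∧ F₂)[p := ⊥] ∨ (F₁ ∧ F₂)[p := ⊤]`, and a model of `F₁` and
`F₂` satisfies the disjunct selected by its own value of `p`.
-/

open MvPolynomial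

section

variable {σ R : Type*} [DecidableEq σ]

theorem eval_update_monomial [CommSemiring R] (w : σ → R) (p : σ) (t r : R) (m : σ →₀ ℕ) :
    eval (Function.update w p t) (monomial m r) =
      r * t ^ m p * (m.erase p).prod fun i e => w i ^ e := by
  rw [eval_monomial, ← Finsupp.mul_prod_erase' m p _ (fun _ => pow_zero _),
    Function.update_self, mul_assoc]
  congr 2
  refine Finsupp.prod_congr fun i hi => ?_
  rw [Function.update_of_ne (by rintro rfl; simp at hi)]

theorem eval_pderiv_monomial_of_le_one [CommRing R] (w : σ → R) (p : σ) (r : R)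
    {m : σ →₀ ℕ} (hm : m p ≤ 1) :
    eval w (pderiv p (monomial m r)) =
      eval (Function.update w p 1) (monomial m r) - eval (Function.update w p 0) (monomial m r) := by
  rw [eval_update_monomial, eval_update_monomial, pderiv_monomial]
  rcases Nat.le_one_iff_eq_zero_or_eq_one.mp hm with h | h
  · simp [h]
  · have herase : m - Finsupp.single p 1 = m.erase p := by
      ext i
      rcases eq_or_ne i p with rfl | hi
      · simp [h]
      · simp [hi, Finsupp.single_eq_of_ne hi]
    rw [herase, eval_monomial, h]
    ring

theorem eval_pderiv_of_degreeOf_le_one [CommRing R] (w : σ → R) (p : σ)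
    {q : MvPolynomial σ R} (hq : degreeOf p q ≤ 1) :
    eval w (pderiv p q) = eval (Function.update w p 1) q - eval (Function.update w p 0) q := by
  conv_lhs => rw [q.as_sum]
  conv_rhs => rw [q.as_sum]
  simp only [map_sum, ← Finset.sum_sub_distrib]
  exact Finset.sum_congr rfl fun m hm =>
    eval_pderiv_monomial_of_le_one w p _ (degreeOf_le_iff.mp hq m hm)

end

theorem pow_min_one_of_isIdempotentElem {M : Type*} [Monoid M] {x : M}
    (hx : IsIdempotentElem x) (e : ℕ) : x ^ min e 1 = x ^ e := by
  rcases Nat.eq_zero_or_pos e with rfl | he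
  · simp
  · rw [Nat.min_eq_right he, pow_one, hx.pow_eq he.ne']

theorem ZMod.isIdempotentElem_two (x : ZMod 2) : IsIdempotentElem x := by
  rw [IsIdempotentElem, ← sq, ZMod.pow_card]

section

variable {n : ℕ}

theorem eval_squash (w : Fin n → ZMod 2) (a : MvPolynomial (Fin n) (ZMod 2)) :
    eval w (squash a) = eval w a := by
  rw [squash, map_sum, eval_eq]
  refine Finset.sum_congr rfl fun m _ => ?_
  rw [eval_monomial, Finsupp.prod_mapRange_index fun _ => pow_zero _]
  exact congrArg _ (Finsupp.prod_congr fun i _ =>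
    pow_min_one_of_isIdempotentElem (ZMod.isIdempotentElem_two (w i)) (m i))

theorem degreeOf_squash_le_one (p : Fin n) (a : MvPolynomial (Fin n) (ZMod 2)) :
    degreeOf p (squash a) ≤ 1 := by
  refine (degreeOf_sum_le p _ _).trans (Finset.sup_le fun m _ => degreeOf_le_iff.mpr ?_)
  intro m' hm'
  rw [Finset.mem_singleton.mp (support_monomial_subset hm'), Finsupp.mapRange_apply]
  exact min_le_right _ _

theorem eval_bPart (p : Fin n) (w : Fin n → ZMod 2) (a : MvPolynomial (Fin n) (ZMod 2)) :
    eval w (bPart p a) = eval (Function.update w p 0) a := by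
  rw [bPart, aeval_def, algebraMap_eq, ← eval_assoc]
  congr 2
  funext j
  by_cases hj : j = p <;> simp [hj]

theorem eval_cPart_squash (p : Fin n) (w : Fin n → ZMod 2) (a : MvPolynomial (Fin n) (ZMod 2)) :
    eval w (cPart p (squash a)) =
      eval (Function.update w p 1) a - eval (Function.update w p 0) a := by
  rw [cPart, eval_pderiv_of_degreeOf_le_one w p (degreeOf_squash_le_one p a),
    eval_squash, eval_squash]

theorem eval_indRule_squash (p : Fin n) (w : Fin n → ZMod 2)
    (a₁ a₂ : MvPolynomial (Fin n) (ZMod 2)) :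
    eval w (indRule p (squash a₁) (squash a₂)) =
      1 + (1 + eval (Function.update w p 0) a₁ * eval (Function.update w p 0) a₂) *
        (1 + eval (Function.update w p 1) a₁ * eval (Function.update w p 1) a₂) := by
  rw [indRule, eval_squash]
  simp only [map_add, map_mul, map_one, eval_bPart, eval_cPart_squash, eval_squash]
  ring

theorem bval_injective : Function.Injective bval := by
  decide

theorem Fm.eval_poly (u : Fin n → Bool) (F : Fm (Fin n)) :
    MvPolynomial.eval (fun i => bval (u i)) F.poly = bval (F.eval u) := by
  induction F with
  | bot => rfl
  | var i => simp [Fm.poly, Fm.eval]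
  | not F ih =>
    simp only [Fm.poly, Fm.eval, map_add, map_one, ih]
    cases F.eval u <;> decide
  | and F G ihF ihG =>
    simp only [Fm.poly, Fm.eval, map_mul, ihF, ihG]
    cases F.eval u <;> cases G.eval u <;> decide
  | or F G ihF ihG =>
    simp only [Fm.poly, Fm.eval, map_add, map_mul, ihF, ihG]
    cases F.eval u <;> cases G.eval u <;> decide
  | imp F G ihF ihG =>
    simp only [Fm.poly, Fm.eval, map_add, map_mul, map_one, ihF, ihG]
    cases F.eval u <;> cases G.eval u <;> decide
  | iff F G ihF ihG =>
    simp only [Fm.poly, Fm.eval, map_add, map_one, ihF, ihG]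
    cases F.eval u <;> cases G.eval u <;> decide

theorem eval_indRule_proj (p : Fin n) (F₁ F₂ : Fm (Fin n)) (v : Fin n → Bool) :
    eval (fun i => bval (v i)) (indRule p F₁.proj F₂.proj) =
      bval ((F₁.eval (Function.update v p false) && F₂.eval (Function.update v p false)) ||
        (F₁.eval (Function.update v p true) && F₂.eval (Function.update v p true))) := by
  have hupdate (t : Bool) :
      Function.update (fun i => bval (v i)) p (bval t) = fun i => bval (Function.update v p t i) :=
    (Function.comp_update bval v p t).symm
  rw [Fm.proj, Fm.proj, eval_indRule_squash, ← show bval false = 0 from rfl,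
    ← show bval true = 1 from rfl, hupdate, hupdate, Fm.eval_poly, Fm.eval_poly, Fm.eval_poly,
    Fm.eval_poly]
  cases F₁.eval (Function.update v p false) <;> cases F₂.eval (Function.update v p false) <;>
    cases F₁.eval (Function.update v p true) <;> cases F₂.eval (Function.update v p true) <;>
    decide

end

/-- `Θ` is specified semantically: `D` is any formula whose truth value is the evaluation of
`∂_{x_p}(π F₁, π F₂)`. -/
theorem stmt16 {n : ℕ} (p : Fin n) (F₁ F₂ D : Fm (Fin n))
    (hD : ∀ v : Fin n → Bool,
      bval (D.eval v) =
        MvPolynomial.eval (fun i => bval (v i)) (indRule p F₁.proj F₂.proj)) :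
    ∀ v : Fin n → Bool, F₁.eval v = true → F₂.eval v = true → D.eval v = true := by
  intro v h₁ h₂
  have hDv := bval_injective ((hD v).trans (eval_indRule_proj p F₁ F₂ v))
  have hv : Function.update v p (v p) = v := Function.update_eq_self p v
  cases hvp : v p <;> rw [hvp] at hv <;> simp [hDv, hv, h₁, h₂]
end
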